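/- Let (ξ_i, F_i)_{i=1..n} be a martingale difference sequence with ξ_i ≥ -1 a.s., S_n = Σξ_i, [S]_n = Σξ_i². Then for all x > 0 and p > 1, P(S_n ≥ x[S]_n) ≤ (E[exp{-(p-1)(x - log(1+x))[S]_n}·1_{S_n ≥ x[S]_n}])^{1/p}. -/

import Mathlib

open MeasureTheory Real Finset

lemma key_pointwise {l y : ℝ} (hl0 : 0 ≤ l) (hl1 : l < 1) (hy : -1 ≤ y) :
    Real.exp (l * y - (-l - Real.log (1 - l)) * y ^ 2) ≤ 1 + l * y := by
  rcases hl0.eq_or_lt with h | hl0'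
  · simp [← h]
  have h1 : 0 < 1 + l * y := by nlinarith
  rw [← Real.exp_log h1, Real.exp_le_exp]
  set F : ℝ → ℝ := fun t => Real.log (1 + t * y) - t * y + (-t - Real.log (1 - t)) * y ^ 2 with hF
  have hder : ∀ t ∈ Set.Icc (0:ℝ) l,
      HasDerivAt F (y / (1 + t * y) - y + (-1 - (-1) / (1 - t)) * y ^ 2) t := by
    intro t ht
    have ht1 : 0 < 1 - t := by cases ht; linarith
    have ht2 : 0 < 1 + t * y := by cases ht; nlinarith
    have d1 : HasDerivAt (fun t : ℝ => 1 + t * y) y t := by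
      simpa using (hasDerivAt_mul_const y).const_add 1
    have d2 : HasDerivAt (fun t : ℝ => Real.log (1 + t * y)) (y / (1 + t * y)) t :=
      d1.log ht2.ne'
    have d3 : HasDerivAt (fun t : ℝ => 1 - t) (-1) t := by
      simpa using (hasDerivAt_id t).const_sub 1
    have d4 : HasDerivAt (fun t : ℝ => -t - Real.log (1 - t)) (-1 - (-1) / (1 - t)) t :=
      (hasDerivAt_neg t).sub (d3.log ht1.ne')
    exact (d2.sub (hasDerivAt_mul_const y)).add (d4.mul_const (y ^ 2))
  have hmono : MonotoneOn F (Set.Icc 0 l) := by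
    apply monotoneOn_of_deriv_nonneg (convex_Icc 0 l)
    · exact fun t ht => ((hder t ht).continuousAt).continuousWithinAt
    · intro t ht
      rw [interior_Icc] at ht
      exact ((hder t (Set.mem_Icc_of_Ioo ht)).differentiableAt).differentiableWithinAt
    · intro t ht
      rw [interior_Icc] at ht
      rw [(hder t (Set.mem_Icc_of_Ioo ht)).deriv]
      have ht1 : 0 < 1 - t := by cases ht; linarith
      have ht2 : 0 < 1 + t * y := by cases ht; nlinarith
      have key : y / (1 + t * y) - y + (-1 - (-1) / (1 - t)) * y ^ 2
          = t ^ 2 * y ^ 2 * (1 + y) / ((1 - t) * (1 + t * y)) := by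
        rw [eq_div_iff (mul_ne_zero ht1.ne' ht2.ne')]
        have e1 : y / (1 + t * y) * (1 + t * y) = y := div_mul_cancel₀ _ ht2.ne'
        have e2 : (-1) / (1 - t) * (1 - t) = -1 := div_mul_cancel₀ _ ht1.ne'
        linear_combination (1 - t) * e1 - y ^ 2 * (1 + t * y) * e2
      rw [key]
      have hnum : (0:ℝ) ≤ t ^ 2 * y ^ 2 * (1 + y) :=
        mul_nonneg (by positivity) (by linarith)
      exact div_nonneg hnum (by positivity)
  have h0 : F 0 ≤ F l := hmono (Set.left_mem_Icc.2 hl0) (Set.right_mem_Icc.2 hl0) hl0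
  have hF0 : F 0 = 0 := by simp [hF]
  have hFl : F l = Real.log (1 + l * y) - l * y + (-l - Real.log (1 - l)) * y ^ 2 := rfl
  linarith [hF0 ▸ hFl ▸ h0]

lemma quad_bound {l ψ y : ℝ} (hψ : 0 < ψ) : l * y - ψ * y ^ 2 ≤ l ^ 2 / (4 * ψ) := by
  rw [le_div_iff₀ (by linarith)]
  nlinarith [sq_nonneg (2 * ψ * y - l)]

lemma exp_integral_le_one {Ω : Type*} {m0 : MeasurableSpace Ω} (μ : Measure Ω)
    [IsProbabilityMeasure μ] (n : ℕ) (ℱ : Filtration ℕ m0) (ξ : ℕ → Ω → ℝ)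
    (hadapted : ∀ i, 1 ≤ i → i ≤ n → StronglyMeasurable[ℱ i] (ξ i))
    (hsq : ∀ i, 1 ≤ i → i ≤ n → MemLp (ξ i) 2 μ)
    (hcond : ∀ i, 1 ≤ i → i ≤ n → μ[ξ i | ℱ (i - 1)] =ᵐ[μ] 0)
    (hbdd : ∀ i, 1 ≤ i → i ≤ n → ∀ᵐ ω ∂μ, -1 ≤ ξ i ω)
    {l ψ : ℝ} (hl0 : 0 < l) (hl1 : l < 1) (hψ : ψ = -l - Real.log (1 - l)) :
    ∀ k, k ≤ n →
      ∫ ω, Real.exp (∑ i ∈ Finset.Icc 1 k, (l * ξ i ω - ψ * (ξ i ω) ^ 2)) ∂μ ≤ 1 := by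
  have hψ0 : 0 < ψ := by
    have := Real.log_lt_sub_one_of_pos (show (0:ℝ) < 1 - l by linarith)
      (by intro h; rw [sub_eq_self] at h; exact hl0.ne' h)
    rw [hψ]; linarith
  -- abbreviations
  set M : ℕ → Ω → ℝ := fun k ω => Real.exp (∑ i ∈ Finset.Icc 1 k, (l * ξ i ω - ψ * (ξ i ω) ^ 2))
    with hM
  have hMbdd : ∀ k ω, M k ω ≤ Real.exp (k * (l ^ 2 / (4 * ψ))) := by
    intro k ω
    apply Real.exp_le_exp.2
    calc ∑ i ∈ Finset.Icc 1 k, (l * ξ i ω - ψ * (ξ i ω) ^ 2)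
        ≤ ∑ i ∈ Finset.Icc 1 k, (l ^ 2 / (4 * ψ)) :=
          Finset.sum_le_sum fun i _ => quad_bound hψ0
      _ = k * (l ^ 2 / (4 * ψ)) := by
          rw [Finset.sum_const, Nat.card_Icc]; simp [nsmul_eq_mul]
  have hMpos : ∀ k ω, 0 < M k ω := fun k ω => Real.exp_pos _
  have hMsm : ∀ k, k ≤ n → StronglyMeasurable[ℱ k] (M k) := by
    intro k hk
    apply Measurable.stronglyMeasurable
    apply Measurable.exp
    apply Finset.measurable_sum
    intro i hi
    simp only [Finset.mem_Icc] at hi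
    have : StronglyMeasurable[ℱ k] (ξ i) :=
      (hadapted i hi.1 (hi.2.trans hk)).mono (ℱ.mono hi.2)
    exact (measurable_const.mul this.measurable).sub
      (measurable_const.mul (this.measurable.pow_const 2))
  have hMint : ∀ k, k ≤ n → Integrable (M k) μ := by
    intro k hk
    refine ⟨((hMsm k hk).mono (ℱ.le k)).aestronglyMeasurable, ?_⟩
    apply HasFiniteIntegral.of_bounded (C := Real.exp (k * (l ^ 2 / (4 * ψ))))
    exact Filter.Eventually.of_forall fun ω => by
      rw [Real.norm_eq_abs, abs_of_pos (hMpos k ω)]; exact hMbdd k ω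
  intro k
  induction k with
  | zero => intro _; simp [hM]
  | succ k ih =>
    intro hkn
    have hk : k ≤ n := Nat.le_of_succ_le hkn
    have ihk := ih hk
    have hsplit : ∀ ω, M (k + 1) ω
        = M k ω * Real.exp (l * ξ (k + 1) ω - ψ * (ξ (k + 1) ω) ^ 2) := by
      intro ω
      rw [hM]
      simp only []
      rw [Finset.sum_Icc_succ_top (Nat.le_add_left 1 k), Real.exp_add]
    have hξint : Integrable (ξ (k + 1)) μ :=
      (hsq (k + 1) (Nat.le_add_left 1 k) hkn).integrable (by norm_num)
    have hMksm0 : AEStronglyMeasurable (M k) μ :=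
      ((hMsm k hk).mono (ℱ.le k)).aestronglyMeasurable
    have hint1 : Integrable (M k * ξ (k + 1)) μ := by
      apply Integrable.bdd_mul (c := Real.exp (k * (l ^ 2 / (4 * ψ)))) hξint hMksm0
      exact Filter.Eventually.of_forall fun ω => by
        rw [Real.norm_eq_abs, abs_of_pos (hMpos k ω)]; exact hMbdd k ω
    have hint2 : Integrable (fun ω => M k ω * (1 + l * ξ (k + 1) ω)) μ := by
      have : (fun ω => M k ω * (1 + l * ξ (k + 1) ω))
          = fun ω => M k ω + l * (M k ω * ξ (k + 1) ω) := by funext ω; ring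
      rw [this]
      exact (hMint k hk).add (hint1.const_mul l)
    have step1 : ∫ ω, M (k + 1) ω ∂μ ≤ ∫ ω, M k ω * (1 + l * ξ (k + 1) ω) ∂μ := by
      apply integral_mono_ae (hMint (k + 1) hkn) hint2
      filter_upwards [hbdd (k + 1) (Nat.le_add_left 1 k) hkn] with ω hω
      rw [hsplit ω]
      have := key_pointwise hl0.le hl1 hω
      rw [← hψ] at this
      exact mul_le_mul_of_nonneg_left this (hMpos k ω).le
    have hzero : ∫ ω, (M k * ξ (k + 1)) ω ∂μ = 0 := by
      have hce : μ[M k * ξ (k + 1) | ℱ k] =ᵐ[μ] M k * μ[ξ (k + 1) | ℱ k] :=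
        condExp_mul_of_stronglyMeasurable_left (hMsm k hk) hint1 hξint
      have hc0 : μ[ξ (k + 1) | ℱ k] =ᵐ[μ] 0 := by
        have := hcond (k + 1) (Nat.le_add_left 1 k) hkn
        simpa using this
      have : μ[M k * ξ (k + 1) | ℱ k] =ᵐ[μ] 0 := by
        filter_upwards [hce, hc0] with ω h1 h2
        simp [h1, Pi.mul_apply, h2]
      calc ∫ ω, (M k * ξ (k + 1)) ω ∂μ
          = ∫ ω, (μ[M k * ξ (k + 1) | ℱ k]) ω ∂μ := (integral_condExp (ℱ.le k)).symm
        _ = ∫ _ω, (0:ℝ) ∂μ := integral_congr_ae this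
        _ = 0 := by simp
    have step2 : ∫ ω, M k ω * (1 + l * ξ (k + 1) ω) ∂μ = ∫ ω, M k ω ∂μ := by
      have heq : (fun ω => M k ω * (1 + l * ξ (k + 1) ω))
          = fun ω => M k ω + l * (M k * ξ (k + 1)) ω := by
        funext ω; simp only [Pi.mul_apply]; ring
      rw [heq, integral_add (hMint k hk) (hint1.const_mul l), integral_const_mul, hzero]
      simp
    calc ∫ ω, M (k + 1) ω ∂μ ≤ ∫ ω, M k ω * (1 + l * ξ (k + 1) ω) ∂μ := step1
      _ = ∫ ω, M k ω ∂μ := step2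
      _ ≤ 1 := ihk


/-- Bernstein-type inequality for self-normalized martingales: for `x > 0` and
`p > 1`, `P(S_n ≥ x[S]_n) ≤ (E[exp{-(p-1)(x - log(1+x))[S]_n} 1_{S_n ≥ x[S]_n}])^{1/p}`. -/
theorem selfNormalized_bernstein {Ω : Type*} {m0 : MeasurableSpace Ω} (μ : Measure Ω)
    [IsProbabilityMeasure μ] (n : ℕ) (ℱ : Filtration ℕ m0) (ξ : ℕ → Ω → ℝ)
    (hadapted : ∀ i, 1 ≤ i → i ≤ n → StronglyMeasurable[ℱ i] (ξ i))
    (hsq : ∀ i, 1 ≤ i → i ≤ n → MemLp (ξ i) 2 μ)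
    (hcond : ∀ i, 1 ≤ i → i ≤ n → μ[ξ i | ℱ (i - 1)] =ᵐ[μ] 0)
    (hbdd : ∀ i, 1 ≤ i → i ≤ n → ∀ᵐ ω ∂μ, -1 ≤ ξ i ω)
    (x p : ℝ) (hx : 0 < x) (hp : 1 < p) :
    (μ {ω | x * ∑ i ∈ Finset.Icc 1 n, (ξ i ω) ^ 2 ≤ ∑ i ∈ Finset.Icc 1 n, ξ i ω}).toReal ≤
      (∫ ω, Set.indicator
          {ω' | x * ∑ i ∈ Finset.Icc 1 n, (ξ i ω') ^ 2 ≤ ∑ i ∈ Finset.Icc 1 n, ξ i ω'}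
          (fun ω' => Real.exp (-(p - 1) * (x - Real.log (1 + x)) *
            ∑ i ∈ Finset.Icc 1 n, (ξ i ω') ^ 2)) ω ∂μ) ^ (1 / p) := by
  have hx1 : (0:ℝ) < 1 + x := by linarith
  set l : ℝ := x / (1 + x) with hl
  set ψ : ℝ := -l - Real.log (1 - l) with hψdef
  have hl0 : 0 < l := div_pos hx hx1
  have hl1 : l < 1 := (div_lt_one hx1).2 (by linarith)
  have hl1x : l * (1 + x) = x := div_mul_cancel₀ x hx1.ne'
  have h1l : 1 - l = (1 + x)⁻¹ := by rw [hl]; field_simp; ring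
  have hψval : ψ = Real.log (1 + x) - l := by rw [hψdef, h1l, Real.log_inv]; ring
  have hlψx : l * x - ψ = x - Real.log (1 + x) := by rw [hψval]; nlinarith [hl1x]
  have hψ0 : 0 < ψ := by
    have := Real.log_lt_sub_one_of_pos (show (0:ℝ) < 1 - l by linarith)
      (by intro h; rw [sub_eq_self] at h; exact hl0.ne' h)
    rw [hψdef]; linarith
  -- notation
  set S : Ω → ℝ := fun ω => ∑ i ∈ Finset.Icc 1 n, ξ i ω with hS
  set Q : Ω → ℝ := fun ω => ∑ i ∈ Finset.Icc 1 n, (ξ i ω) ^ 2 with hQ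
  set A : Set Ω := {ω' | x * ∑ i ∈ Finset.Icc 1 n, (ξ i ω') ^ 2 ≤ ∑ i ∈ Finset.Icc 1 n, ξ i ω'}
    with hAdef
  set g : Ω → ℝ := fun ω' => Real.exp (-(p - 1) * (x - Real.log (1 + x)) *
    ∑ i ∈ Finset.Icc 1 n, (ξ i ω') ^ 2) with hgdef
  have hξmeas : ∀ i ∈ Finset.Icc 1 n, Measurable (ξ i) := by
    intro i hi
    simp only [Finset.mem_Icc] at hi
    exact ((hadapted i hi.1 hi.2).mono (ℱ.le i)).measurable
  have hSmeas : Measurable S := Finset.measurable_sum _ fun i hi => hξmeas i hi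
  have hQmeas : Measurable Q := Finset.measurable_sum _ fun i hi => (hξmeas i hi).pow_const 2
  have hAmeas : MeasurableSet A := measurableSet_le (measurable_const.mul hQmeas) hSmeas
  have hQ0 : ∀ ω, 0 ≤ Q ω := fun ω => Finset.sum_nonneg fun i _ => sq_nonneg _
  have hc0 : 0 ≤ x - Real.log (1 + x) := by
    have := Real.log_le_sub_one_of_pos hx1; linarith
  have hg0 : ∀ ω, 0 ≤ g ω := fun ω => (Real.exp_pos _).le
  have hg1 : ∀ ω, g ω ≤ 1 := by
    intro ω
    have hpos : (0:ℝ) ≤ (p - 1) * (x - Real.log (1 + x)) * Q ω :=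
      mul_nonneg (mul_nonneg (by linarith) hc0) (hQ0 ω)
    calc g ω = Real.exp (-(p - 1) * (x - Real.log (1 + x)) * Q ω) := rfl
      _ ≤ Real.exp 0 := Real.exp_le_exp.2 (by linarith)
      _ = 1 := Real.exp_zero
  have hgmeas : Measurable g := ((hQmeas.const_mul _).exp)
  have hind_meas : Measurable (A.indicator g) := hgmeas.indicator hAmeas
  have hind_int : Integrable (A.indicator g) μ := by
    refine ⟨hind_meas.aestronglyMeasurable, ?_⟩
    apply HasFiniteIntegral.of_bounded (C := (1:ℝ))
    apply Filter.Eventually.of_forall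
    intro ω
    rw [Real.norm_eq_abs, abs_of_nonneg (Set.indicator_nonneg (fun ω' _ => hg0 ω') ω)]
    by_cases hω : ω ∈ A
    · rw [Set.indicator_of_mem hω]; exact hg1 ω
    · rw [Set.indicator_of_notMem hω]; exact zero_le_one
  have hind_nonneg : ∀ ω, 0 ≤ A.indicator g ω := Set.indicator_nonneg fun ω' _ => hg0 ω'
  set I : ℝ := ∫ ω, A.indicator g ω ∂μ with hI
  have hI0 : 0 ≤ I := integral_nonneg hind_nonneg
  -- the exponential martingale
  set Mn : Ω → ℝ := fun ω => Real.exp (∑ i ∈ Finset.Icc 1 n, (l * ξ i ω - ψ * (ξ i ω) ^ 2))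
    with hMn
  have hEM : ∫ ω, Mn ω ∂μ ≤ 1 :=
    exp_integral_le_one μ n ℱ ξ hadapted hsq hcond hbdd hl0 hl1 hψdef n le_rfl
  have hMnval : ∀ ω, Mn ω = Real.exp (l * S ω - ψ * Q ω) := by
    intro ω
    apply congrArg Real.exp
    show ∑ i ∈ Finset.Icc 1 n, (l * ξ i ω - ψ * (ξ i ω) ^ 2)
        = l * ∑ i ∈ Finset.Icc 1 n, ξ i ω - ψ * ∑ i ∈ Finset.Icc 1 n, (ξ i ω) ^ 2
    rw [Finset.mul_sum, Finset.mul_sum, ← Finset.sum_sub_distrib]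
  have hMnmeas : Measurable Mn := by
    apply Measurable.exp
    apply Finset.measurable_sum
    intro i hi
    exact (measurable_const.mul (hξmeas i hi)).sub
      (measurable_const.mul ((hξmeas i hi).pow_const 2))
  have hMnint : Integrable Mn μ := by
    refine ⟨hMnmeas.aestronglyMeasurable, ?_⟩
    apply HasFiniteIntegral.of_bounded (C := Real.exp (n * (l ^ 2 / (4 * ψ))))
    apply Filter.Eventually.of_forall
    intro ω
    rw [Real.norm_eq_abs, abs_of_pos (Real.exp_pos _), Real.exp_le_exp]
    calc ∑ i ∈ Finset.Icc 1 n, (l * ξ i ω - ψ * (ξ i ω) ^ 2)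
        ≤ ∑ _i ∈ Finset.Icc 1 n, (l ^ 2 / (4 * ψ)) :=
          Finset.sum_le_sum fun i _ => quad_bound hψ0
      _ = n * (l ^ 2 / (4 * ψ)) := by
          rw [Finset.sum_const, Nat.card_Icc]; simp [nsmul_eq_mul]
  -- Hölder setup
  set q : ℝ := Real.conjExponent p with hq
  have hcj : q.HolderConjugate p := (Real.HolderConjugate.conjExponent hp).symm
  have hp0 : (0:ℝ) < p := by linarith
  have hp1 : p - 1 ≠ 0 := by intro h; rw [sub_eq_zero] at h; exact hp.ne' h
  set F : Ω → ENNReal := fun ω => ENNReal.ofReal (Mn ω) ^ ((p - 1) / p) with hF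
  set G : Ω → ENNReal := fun ω => ENNReal.ofReal (A.indicator g ω) ^ (1 / p) with hG
  have hFmeas : AEMeasurable F μ :=
    (hMnmeas.ennreal_ofReal.pow measurable_const).aemeasurable
  have hGmeas : AEMeasurable G μ :=
    (hind_meas.ennreal_ofReal.pow measurable_const).aemeasurable
  have hpoint : ∀ ω, A.indicator (1 : Ω → ENNReal) ω ≤ F ω * G ω := by
    intro ω
    by_cases hω : ω ∈ A
    · rw [Set.indicator_of_mem hω]
      set b : ℝ := Real.exp ((x - Real.log (1 + x)) * Q ω) with hb
      have hbpos : 0 < b := Real.exp_pos _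
      have hgb : g ω = b ^ (-(p - 1)) := by
        rw [hb, Real.rpow_def_of_pos (Real.exp_pos _), Real.log_exp]
        show Real.exp (-(p - 1) * (x - Real.log (1 + x)) * Q ω) = _
        exact congrArg Real.exp (by ring)
      have hMb : b ≤ Mn ω := by
        rw [hMnval ω, hb, Real.exp_le_exp, ← hlψx]
        have hxQS : x * Q ω ≤ S ω := hω
        nlinarith [mul_le_mul_of_nonneg_left hxQS hl0.le]
      have hFge : ENNReal.ofReal b ^ ((p - 1) / p) ≤ F ω :=
        ENNReal.rpow_le_rpow (ENNReal.ofReal_le_ofReal hMb)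
          (div_nonneg (by linarith) (by linarith))
      have hGeq : G ω = ENNReal.ofReal b ^ (-(p - 1) * (1 / p)) := by
        show ENNReal.ofReal (A.indicator g ω) ^ (1 / p) = _
        rw [Set.indicator_of_mem hω, hgb, ← ENNReal.ofReal_rpow_of_pos hbpos,
          ← ENNReal.rpow_mul]
      have hbne0 : ENNReal.ofReal b ≠ 0 := (ENNReal.ofReal_pos.2 hbpos).ne'
      have hbnetop : ENNReal.ofReal b ≠ ⊤ := ENNReal.ofReal_ne_top
      calc (1:ENNReal) = ENNReal.ofReal b ^ ((p - 1) / p + -(p - 1) * (1 / p)) := by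
            rw [show (p - 1) / p + -(p - 1) * (1 / p) = 0 by ring, ENNReal.rpow_zero]
        _ = ENNReal.ofReal b ^ ((p - 1) / p) * ENNReal.ofReal b ^ (-(p - 1) * (1 / p)) :=
            ENNReal.rpow_add _ _ hbne0 hbnetop
        _ ≤ F ω * G ω := by rw [hGeq]; exact mul_le_mul_left hFge _
    · rw [Set.indicator_of_notMem hω]; exact zero_le
  have hFq : ∀ ω, F ω ^ q = ENNReal.ofReal (Mn ω) := by
    intro ω
    show (ENNReal.ofReal (Mn ω) ^ ((p - 1) / p)) ^ q = _
    rw [← ENNReal.rpow_mul, show (p - 1) / p * q = 1 by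
      rw [hq, Real.conjExponent]; field_simp, ENNReal.rpow_one]
  have hGp : ∀ ω, G ω ^ p = ENNReal.ofReal (A.indicator g ω) := by
    intro ω
    show (ENNReal.ofReal (A.indicator g ω) ^ (1 / p)) ^ p = _
    rw [← ENNReal.rpow_mul, show 1 / p * p = 1 by field_simp, ENNReal.rpow_one]
  have hFint : (∫⁻ ω, F ω ^ q ∂μ) ≤ 1 := by
    simp_rw [hFq]
    rw [← ofReal_integral_eq_lintegral_ofReal hMnint
      (Filter.Eventually.of_forall fun ω => (Real.exp_pos _).le)]
    exact ENNReal.ofReal_le_one.2 hEM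
  have hGint : (∫⁻ ω, G ω ^ p ∂μ) = ENNReal.ofReal I := by
    simp_rw [hGp]
    rw [← ofReal_integral_eq_lintegral_ofReal hind_int
      (Filter.Eventually.of_forall hind_nonneg)]
  have hmain : μ A ≤ ENNReal.ofReal I ^ (1 / p) := by
    calc μ A = ∫⁻ ω, A.indicator (1 : Ω → ENNReal) ω ∂μ := by
          rw [lintegral_indicator_one hAmeas]
      _ ≤ ∫⁻ ω, (F * G) ω ∂μ := lintegral_mono hpoint
      _ ≤ (∫⁻ ω, F ω ^ q ∂μ) ^ (1 / q) * (∫⁻ ω, G ω ^ p ∂μ) ^ (1 / p) :=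
          ENNReal.lintegral_mul_le_Lp_mul_Lq μ hcj hFmeas hGmeas
      _ ≤ 1 ^ (1 / q) * (ENNReal.ofReal I) ^ (1 / p) := by
          rw [hGint]
          exact mul_le_mul_left (ENNReal.rpow_le_rpow hFint hcj.one_div_nonneg) _
      _ = (ENNReal.ofReal I) ^ (1 / p) := by rw [ENNReal.one_rpow, one_mul]
  have hne : ENNReal.ofReal I ^ (1 / p) ≠ ⊤ :=
    ENNReal.rpow_ne_top_of_nonneg (by positivity) ENNReal.ofReal_ne_top
  have := ENNReal.toReal_mono hne hmain
  rwa [← ENNReal.toReal_rpow, ENNReal.toReal_ofReal hI0] at this
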